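/- arXiv:2010.04919 — 2 statements merged into one kernel-verified Lean document; each statement's English description precedes it below -/
import Mathlib

section
/- The equation y² - 377·z² = 14·(x⁴ - 89726) has a solution (x,y,z) ∈ ℝ³ and a solution (x,y,z) ∈ (ℚ_p)³ for every prime p ≠ 29, but it has no solution (x,y,z) ∈ (ℚ_29)³ (and hence no solution in ℚ³). -/
instance : Fact (Nat.Prime 29) := ⟨by norm_num⟩

/-! ### Auxiliary lemmas -/

open Polynomial in
/-- Hensel-style root extraction for `c * w ^ 2 = n` over `ℚ_p`. -/
lemma padic_root_quadratic {p : ℕ} [Fact p.Prime] (c n a : ℤ)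
    (h1 : (p:ℤ) ∣ c*a^2 - n) (h2 : ¬ (p:ℤ) ∣ 2*(c*a)) :
    ∃ w : ℚ_[p], (c:ℚ_[p]) * w^2 = (n:ℚ_[p]) := by
  set F : Polynomial ℤ_[p] := C (c:ℤ_[p]) * X^2 - C (n:ℤ_[p]) with hF
  have hFe : ∀ t : ℤ_[p], F.eval t = c*t^2 - n := by intro t; simp [hF]
  have hFd : ∀ t : ℤ_[p], F.derivative.eval t = 2*(c*t) := by
    intro t; simp [hF]; ring
  have hde : F.derivative.eval ((a:ℤ_[p])) = ((2*(c*a) : ℤ) : ℤ_[p]) := by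
    rw [hFd]; push_cast; ring
  have hdn : ‖F.derivative.eval ((a:ℤ_[p]))‖ = 1 := by
    rw [hde]
    refine le_antisymm (PadicInt.norm_le_one _) ?_
    by_contra h
    exact h2 ((PadicInt.norm_int_lt_one_iff_dvd _).mp (lt_of_not_ge h))
  have hev : F.eval ((a:ℤ_[p])) = ((c*a^2 - n : ℤ) : ℤ_[p]) := by
    rw [hFe]; push_cast; ring
  have hnorm : ‖F.eval ((a:ℤ_[p]))‖ < ‖F.derivative.eval ((a:ℤ_[p]))‖^2 := by
    rw [hdn, hev, one_pow]
    exact (PadicInt.norm_int_lt_one_iff_dvd _).mpr h1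
  obtain ⟨z, hz, -⟩ := hensels_lemma hnorm
  rw [Polynomial.coe_aeval_eq_eval, hFe] at hz
  refine ⟨(z : ℚ_[p]), ?_⟩
  have : ((c:ℤ_[p])*z^2 : ℤ_[p]) = ((n:ℤ_[p])) := sub_eq_zero.mp hz
  exact_mod_cast congrArg (Subtype.val) this

open Polynomial in
/-- Solvability of the conic `a² - c b² = t` over `ZMod p`. -/
lemma zmod_conic {p : ℕ} [Fact p.Prime] (hp2 : p ≠ 2) (c t : ℤ)
    (hc : ¬ (p:ℤ) ∣ c) :
    ∃ a b : ZMod p, a^2 - (c:ZMod p)*b^2 = (t:ZMod p) := by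
  have hc' : (c : ZMod p) ≠ 0 := by
    rwa [Ne, ZMod.intCast_zmod_eq_zero_iff_dvd]
  have hcard : Fintype.card (ZMod p) % 2 = 1 := by
    rw [ZMod.card]; exact (Nat.Prime.mod_two_eq_one_iff_ne_two Fact.out).mpr hp2
  obtain ⟨a, b, hab⟩ := FiniteField.exists_root_sum_quadratic
    (f := X^2 - C (t : ZMod p)) (g := -(C (c:ZMod p) * X^2))
    (Polynomial.degree_X_pow_sub_C (by norm_num) _)
    (by rw [Polynomial.degree_neg, Polynomial.degree_C_mul_X_pow _ hc']; rfl)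
    hcard
  refine ⟨a, b, ?_⟩
  simp only [Polynomial.eval_sub, Polynomial.eval_pow, Polynomial.eval_X,
    Polynomial.eval_C, Polynomial.eval_neg, Polynomial.eval_mul] at hab
  linear_combination hab

/-- Solvability of the conic `y² - c z² = t` over `ℚ_p` for odd `p` with `p ∤ c`, `p ∤ t`. -/
lemma padic_conic {p : ℕ} [Fact p.Prime] (hp2 : p ≠ 2) (c t : ℤ)
    (hc : ¬ (p:ℤ) ∣ c) (ht : ¬ (p:ℤ) ∣ t) :
    ∃ y z : ℚ_[p], y^2 - (c:ℚ_[p]) * z^2 = (t:ℚ_[p]) := by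
  obtain ⟨a, b, hab⟩ := zmod_conic hp2 c t hc
  have h2 : ((2:ℤ) : ZMod p) ≠ 0 := by
    rw [Ne, ZMod.intCast_zmod_eq_zero_iff_dvd]
    intro h
    exact hp2 ((Nat.prime_dvd_prime_iff_eq (Fact.out) Nat.prime_two).mp
      (by exact_mod_cast h))
  set A : ℤ := (a.val : ℤ) with hA
  set B : ℤ := (b.val : ℤ) with hB
  have hAa : ((A:ℤ) : ZMod p) = a := by rw [hA]; simp [ZMod.natCast_val, ZMod.cast_id]
  have hBb : ((B:ℤ) : ZMod p) = b := by rw [hB]; simp [ZMod.natCast_val, ZMod.cast_id]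
  by_cases ha0 : a = 0
  · have hb0 : b ≠ 0 := by
      intro hb0
      apply ht
      rw [← ZMod.intCast_zmod_eq_zero_iff_dvd]
      rw [ha0, hb0] at hab
      linear_combination -hab
    obtain ⟨w, hw⟩ := padic_root_quadratic (p := p) c (A^2 - t) B
      (by
        rw [← ZMod.intCast_zmod_eq_zero_iff_dvd]
        push_cast
        rw [hAa, hBb]
        linear_combination -hab)
      (by
        rw [← ZMod.intCast_zmod_eq_zero_iff_dvd] at *
        push_cast
        rw [hBb]
        intro h
        rcases mul_eq_zero.mp h with h | h
        · exact h2 (by exact_mod_cast h)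
        · rcases mul_eq_zero.mp h with h | h
          · exact hc h
          · exact hb0 h)
    refine ⟨(A : ℚ_[p]), w, ?_⟩
    push_cast at hw ⊢
    linear_combination -hw
  · obtain ⟨w, hw⟩ := padic_root_quadratic (p := p) 1 (c*B^2 + t) A
      (by
        rw [← ZMod.intCast_zmod_eq_zero_iff_dvd]
        push_cast
        rw [hAa, hBb]
        linear_combination hab)
      (by
        rw [← ZMod.intCast_zmod_eq_zero_iff_dvd]
        push_cast
        rw [hAa]
        intro h
        rcases mul_eq_zero.mp h with h | h
        · exact h2 (by exact_mod_cast h)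
        · rcases mul_eq_zero.mp h with h | h
          · exact one_ne_zero h
          · exact ha0 h)
    refine ⟨w, (B : ℚ_[p]), ?_⟩
    push_cast at hw ⊢
    linear_combination hw

/-! ### The 29-adic obstruction -/

lemma dvd29 (x : ℤ_[29]) (hx : PadicInt.toZMod x = 0) : (29:ℤ_[29]) ∣ x := by
  have : x ∈ RingHom.ker (PadicInt.toZMod (p := 29)) := hx
  rw [PadicInt.ker_toZMod, PadicInt.maximalIdeal_eq_span_p,
    Ideal.mem_span_singleton] at this
  exact_mod_cast this

lemma h290 : PadicInt.toZMod (29:ℤ_[29]) = 0 := by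
  have := map_natCast (PadicInt.toZMod (p := 29)) 29
  norm_num at this ⊢
  rw [this]
  decide

lemma h29ne : (29:ℤ_[29]) ≠ 0 := by
  intro h
  have := congrArg (fun t : ℤ_[29] => ‖t‖) h
  simp only [norm_zero] at this
  rw [show ((29:ℤ_[29])) = ((29:ℕ):ℤ_[29]) by norm_num, PadicInt.norm_p (p:=29)] at this
  norm_num at this

lemma key1 : ∀ x y : ZMod 29, y^2 = 14*x^4 → x = 0 ∧ y = 0 := by decide
lemma key2 : ∀ z : ZMod 29, 13*z^2 = 0 → z = 0 := by decide
lemma key3 : ∀ y : ZMod 29, y^2 = 0 → y = 0 := by decide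
lemma key4 : ∀ z : ZMod 29, 13*z^2 ≠ 43316 := by decide

lemma descent : ∀ (k : ℕ) (X Y Z : ℤ_[29]),
    Y^2 - 377*Z^2 ≠ 14*X^4 - 43316*29^(4*k+1) := by
  intro k
  induction k with
  | zero =>
    intro X Y Z hE
    rw [show (4*0+1) = 1 by rfl, pow_one] at hE
    have φE := congrArg (PadicInt.toZMod (p := 29)) hE
    simp only [map_sub, map_mul, map_pow, map_ofNat, h290, mul_zero, sub_zero,
      show ((377 : ZMod 29)) = 0 by decide, show ((29 : ZMod 29)) = 0 by decide,
      zero_mul] at φE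
    obtain ⟨hX0, hY0⟩ := key1 _ _ φE
    obtain ⟨X₁, rfl⟩ := dvd29 X hX0
    obtain ⟨Y₁, rfl⟩ := dvd29 Y hY0
    have E₁ : 29*Y₁^2 - 13*Z^2 = 341446*X₁^4 - 43316 :=
      mul_left_cancel₀ h29ne (by linear_combination hE)
    have φE₁ := congrArg (PadicInt.toZMod (p := 29)) E₁
    simp only [map_sub, map_mul, map_pow, map_ofNat, h290,
      show ((341446 : ZMod 29)) = 0 by decide, show ((29 : ZMod 29)) = 0 by decide,
      zero_mul] at φE₁
    exact key4 _ (by linear_combination -φE₁)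
  | succ k ih =>
    intro X Y Z hE
    have hpow : (29:ℤ_[29])^(4*(k+1)+1) = 29^(4*k+1) * 29^4 := by
      have h : 4*(k+1)+1 = (4*k+1)+4 := by omega
      rw [h, pow_add]
    rw [hpow] at hE
    set T : ℤ_[29] := (29:ℤ_[29])^(4*k+1) with hT
    have φT : PadicInt.toZMod T = 0 := by
      rw [hT, map_pow, h290, zero_pow (by omega)]
    have φE := congrArg (PadicInt.toZMod (p := 29)) hE
    simp only [map_sub, map_mul, map_pow, map_ofNat, h290, φT, mul_zero, zero_mul,
      sub_zero, show ((377 : ZMod 29)) = 0 by decide,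
      show ((29 : ZMod 29)) = 0 by decide] at φE
    obtain ⟨hX0, hY0⟩ := key1 _ _ φE
    obtain ⟨X₁, rfl⟩ := dvd29 X hX0
    obtain ⟨Y₁, rfl⟩ := dvd29 Y hY0
    have E₁ : 29*Y₁^2 - 13*Z^2 = 341446*X₁^4 - 43316*(T*29^3) :=
      mul_left_cancel₀ h29ne (by linear_combination hE)
    have φE₁ := congrArg (PadicInt.toZMod (p := 29)) E₁
    simp only [map_sub, map_mul, map_pow, map_ofNat, h290, φT, mul_zero, zero_mul,
      show ((341446 : ZMod 29)) = 0 by decide,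
      show ((29 : ZMod 29)) = 0 by decide] at φE₁
    have hZ0 := key2 _ (by linear_combination -φE₁)
    obtain ⟨Z₁, rfl⟩ := dvd29 Z hZ0
    have E₂ : Y₁^2 - 377*Z₁^2 = 11774*X₁^4 - 43316*(T*29^2) :=
      mul_left_cancel₀ h29ne (by linear_combination E₁)
    have φE₂ := congrArg (PadicInt.toZMod (p := 29)) E₂
    simp only [map_sub, map_mul, map_pow, map_ofNat, h290, φT, mul_zero, zero_mul,
      sub_zero, show ((377 : ZMod 29)) = 0 by decide,
      show ((11774 : ZMod 29)) = 0 by decide] at φE₂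
    have hY10 := key3 _ (by linear_combination φE₂)
    obtain ⟨Y₂, rfl⟩ := dvd29 Y₁ hY10
    have E₃ : 29*Y₂^2 - 13*Z₁^2 = 406*X₁^4 - 43316*(T*29) :=
      mul_left_cancel₀ h29ne (by linear_combination E₂)
    have φE₃ := congrArg (PadicInt.toZMod (p := 29)) E₃
    simp only [map_sub, map_mul, map_pow, map_ofNat, h290, φT, mul_zero, zero_mul,
      show ((406 : ZMod 29)) = 0 by decide,
      show ((29 : ZMod 29)) = 0 by decide] at φE₃
    have hZ10 := key2 _ (by linear_combination -φE₃)
    obtain ⟨Z₂, rfl⟩ := dvd29 Z₁ hZ10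
    have E₄ : Y₂^2 - 377*Z₂^2 = 14*X₁^4 - 43316*T :=
      mul_left_cancel₀ h29ne (by linear_combination E₃)
    exact ih X₁ Y₂ Z₂ (by rw [hT] at E₄; exact E₄)

lemma no29 : ¬ ∃ x y z : ℚ_[29], y ^ 2 - 377 * z ^ 2 = 14 * (x ^ 4 - 89726) := by
  rintro ⟨x, y, z, h⟩
  have hnorm29 : ‖(29:ℚ_[29])‖ = (29:ℝ)⁻¹ := by
    have := Padic.norm_p (p := 29)
    norm_num at this ⊢
    exact this
  have hb : ∀ q : ℚ_[29], ∃ n : ℕ, ∀ m : ℕ, n ≤ m → ‖(29:ℚ_[29])^m * q‖ ≤ 1 := by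
    intro q
    obtain ⟨n, hn⟩ := pow_unbounded_of_one_lt ‖q‖ (by norm_num : (1:ℝ) < 29)
    refine ⟨n, fun m hm => ?_⟩
    rw [norm_mul, norm_pow, hnorm29]
    calc (29:ℝ)⁻¹^m * ‖q‖ ≤ (29:ℝ)⁻¹^m * 29^n := by gcongr
    _ ≤ 1 := by
        rw [inv_pow, inv_mul_le_iff₀ (by positivity), mul_one]
        exact pow_le_pow_right₀ (by norm_num) hm
  obtain ⟨n₁, h₁⟩ := hb x
  obtain ⟨n₂, h₂⟩ := hb y
  obtain ⟨n₃, h₃⟩ := hb z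
  obtain ⟨k, hk1, hk2, hk3⟩ : ∃ k, n₁ ≤ k ∧ n₂ ≤ k*2 ∧ n₃ ≤ k*2 :=
    ⟨n₁+n₂+n₃, by omega, by omega, by omega⟩
  have hX : ‖(29:ℚ_[29])^k * x‖ ≤ 1 := h₁ k hk1
  have hY : ‖((29:ℚ_[29])^k)^2 * y‖ ≤ 1 := by rw [← pow_mul]; exact h₂ (k*2) hk2
  have hZ : ‖((29:ℚ_[29])^k)^2 * z‖ ≤ 1 := by rw [← pow_mul]; exact h₃ (k*2) hk3
  apply descent k ⟨_, hX⟩ ⟨_, hY⟩ ⟨_, hZ⟩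
  apply Subtype.coe_injective
  push_cast [show ((29:ℤ_[29]):ℚ_[29]) = 29 from by norm_cast,
    show ((377:ℤ_[29]):ℚ_[29]) = 377 from by norm_cast,
    show ((14:ℤ_[29]):ℚ_[29]) = 14 from by norm_cast,
    show ((43316:ℤ_[29]):ℚ_[29]) = 43316 from by norm_cast]
  have hp4 : (29:ℚ_[29])^(4*k+1) = ((29:ℚ_[29])^k)^4 * 29 := by
    rw [pow_succ, ← pow_mul, Nat.mul_comm]
  rw [hp4]
  erw [PadicInt.coe_pow, PadicInt.coe_pow, PadicInt.coe_pow]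
  dsimp only
  linear_combination ((29:ℚ_[29])^k)^4 * h

/-! ### Solutions over `ℚ_2` -/

open Polynomial in
lemma sqrt377 : ∃ s : ℚ_[2], s^2 = 377 := by
  set F : Polynomial ℤ_[2] := X^2 - C (377:ℤ_[2]) with hF
  have hev : F.eval 1 = ((-376 : ℤ) : ℤ_[2]) := by
    simp [hF]
    norm_num
  have hde : F.derivative.eval 1 = ((2 : ℤ) : ℤ_[2]) := by
    simp [hF]
    norm_num
  have hnorm : ‖F.eval 1‖ < ‖F.derivative.eval 1‖^2 := by
    rw [hev, hde]
    have h1 : ‖((-376 : ℤ) : ℤ_[2])‖ ≤ ((2:ℝ))^(-(3:ℤ)) := by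
      rw [show ((2:ℝ)) = ((2:ℕ):ℝ) by norm_num]
      exact (PadicInt.norm_int_le_pow_iff_dvd (p := 2)).mpr (by norm_num)
    have h2 : ‖((2:ℤ):ℤ_[2])‖ = 2⁻¹ := by
      rw [show ((2:ℤ):ℤ_[2]) = ((2:ℕ):ℤ_[2]) by norm_cast]
      exact_mod_cast PadicInt.norm_p (p := 2)
    rw [h2]
    refine lt_of_le_of_lt h1 ?_
    norm_num
  obtain ⟨w, hw, -⟩ := hensels_lemma hnorm
  have hw' : w^2 = (377:ℤ_[2]) := by
    have : w^2 - 377 = 0 := by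
      have := hw
      simp [hF] at this
      linear_combination this
    linear_combination this
  exact ⟨(w : ℚ_[2]), by exact_mod_cast congrArg (Subtype.val) hw'⟩

lemma sol2 : ∃ x y z : ℚ_[2], y ^ 2 - 377 * z ^ 2 = 14 * (x ^ 4 - 89726) := by
  obtain ⟨s, hs⟩ := sqrt377
  have hs0 : s ≠ 0 := by
    intro h
    rw [h] at hs
    norm_num at hs
  refine ⟨0, ((-1256164:ℚ_[2])+1)/2, (1-(-1256164:ℚ_[2]))/(2*s), ?_⟩
  have h1 : (((-1256164:ℚ_[2])+1)/2)^2 - s^2*((1-(-1256164:ℚ_[2]))/(2*s))^2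
      = (-1256164:ℚ_[2]) := by
    field_simp
    ring
  rw [← hs, h1]
  norm_num

/-! ### The main theorem -/

/-- The Châtelet equation `y² - 377·z² = 14·(x⁴ - 89726)` has a real solution
and a `ℚ_p`-solution for every prime `p ≠ 29`, but no `ℚ_29`-solution (hence no rational
solution). -/
theorem stmt_12 :
    (∃ x y z : ℝ, y ^ 2 - 377 * z ^ 2 = 14 * (x ^ 4 - 89726)) ∧
    (∀ (p : ℕ) [Fact p.Prime], p ≠ 29 →
      ∃ x y z : ℚ_[p], y ^ 2 - 377 * z ^ 2 = 14 * (x ^ 4 - 89726)) ∧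
    (¬ ∃ x y z : ℚ_[29], y ^ 2 - 377 * z ^ 2 = 14 * (x ^ 4 - 89726)) ∧
    (¬ ∃ x y z : ℚ, y ^ 2 - 377 * z ^ 2 = 14 * (x ^ 4 - 89726)) := by
  refine ⟨?_, ?_, no29, ?_⟩
  · refine ⟨18, Real.sqrt 213500, 0, ?_⟩
    rw [Real.sq_sqrt (by norm_num)]
    norm_num
  · intro p hp hp29
    by_cases h2 : p = 2
    · subst h2; exact sol2
    by_cases h7 : p = 7
    · subst h7
      obtain ⟨y', z', hyz⟩ := padic_conic (p := 7) (by norm_num) 377 (-24950)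
        (by norm_num) (by norm_num)
      refine ⟨7, 7*y', 7*z', ?_⟩
      push_cast at hyz
      linear_combination (49:ℚ_[7]) * hyz
    by_cases h13 : p = 13
    · subst h13
      obtain ⟨w, hw⟩ := padic_root_quadratic (p := 13) 1 (-1256150) 1
        (by norm_num) (by norm_num)
      refine ⟨1, w, 0, ?_⟩
      push_cast at hw
      linear_combination hw
    by_cases h17 : p = 17
    · subst h17
      obtain ⟨y', z', hyz⟩ := padic_conic (p := 17) (by norm_num) 377 (-1256150)
        (by norm_num) (by norm_num)
      refine ⟨1, y', z', ?_⟩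
      push_cast at hyz
      linear_combination hyz
    · -- generic prime
      have hp' : p.Prime := Fact.out
      have hdvd : ∀ q : ℕ, q.Prime → (p:ℤ) ∣ (q:ℤ) → p = q := by
        intro q hq h
        exact (Nat.prime_dvd_prime_iff_eq hp' hq).mp (by exact_mod_cast h)
      have hc : ¬ (p:ℤ) ∣ 377 := by
        intro h
        rw [show ((377:ℤ)) = 13*29 by norm_num] at h
        rcases (Int.Prime.dvd_mul' (by exact_mod_cast hp') h) with h | h
        · exact h13 (hdvd 13 (by norm_num) h)
        · exact hp29 (hdvd 29 (by norm_num) h)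
      have ht : ¬ (p:ℤ) ∣ -1256164 := by
        rw [Int.dvd_neg]
        intro h
        rw [show ((1256164:ℤ)) = 2*(2*(7*(7*(13*(17*29))))) by norm_num] at h
        have hpp : Prime (p:ℤ) := Nat.prime_iff_prime_int.mp hp'
        rcases hpp.dvd_mul.mp h with h | h
        · exact h2 (hdvd 2 (by norm_num) h)
        rcases hpp.dvd_mul.mp h with h | h
        · exact h2 (hdvd 2 (by norm_num) h)
        rcases hpp.dvd_mul.mp h with h | h
        · exact h7 (hdvd 7 (by norm_num) h)
        rcases hpp.dvd_mul.mp h with h | h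
        · exact h7 (hdvd 7 (by norm_num) h)
        rcases hpp.dvd_mul.mp h with h | h
        · exact h13 (hdvd 13 (by norm_num) h)
        rcases hpp.dvd_mul.mp h with h | h
        · exact h17 (hdvd 17 (by norm_num) h)
        · exact hp29 (hdvd 29 (by norm_num) h)
      obtain ⟨y', z', hyz⟩ := padic_conic (p := p) h2 377 (-1256164) hc ht
      refine ⟨0, y', z', ?_⟩
      push_cast at hyz
      linear_combination hyz
  · rintro ⟨x, y, z, h⟩
    apply no29
    refine ⟨(x:ℚ_[29]), (y:ℚ_[29]), (z:ℚ_[29]), ?_⟩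
    exact_mod_cast h
end

section
/- The equation y² + 23·z² = -5·(x⁴ + 115) has a solution (x,y,z) ∈ (ℚ_p)³ for every prime p, but it has no solution (x,y,z) ∈ ℝ³ (and hence no solution in ℚ³). -/
/-!
Over an ordered ring the left-hand side is `≥ 0` and the right-hand side is `< 0`.

Over `ℚ_p` a point is built from a square root supplied by Hensel's lemma. For `p ∤ 2·5·23`
take `x = 0`: the conic `y² + 23 z² = -575` has a point mod `p` (two quadrics in one variable each
always share a value in a finite field of odd order), and one coordinate of it is a simple root
that lifts. For `p = 2, 5, 23` explicit points come from `√-23 ∈ ℚ_2`, `√-1 ∈ ℚ_5` and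
`√(-5 - 575·23⁴) ∈ ℚ_23`.
-/

open Polynomial

namespace PadicInt

variable {p : ℕ} [Fact p.Prime]

@[simp, norm_cast]
theorem coe_ofNat (n : ℕ) [n.AtLeastTwo] : ((ofNat(n) : ℤ_[p]) : ℚ_[p]) = ofNat(n) :=
  coe_natCast n

theorem toZMod_eq_zero_iff_norm_lt_one {x : ℤ_[p]} : toZMod x = 0 ↔ ‖x‖ < 1 := by
  rw [← RingHom.mem_ker, ker_toZMod, IsLocalRing.mem_maximalIdeal, mem_nonunits]

theorem toZMod_ne_zero_iff_norm_eq_one {x : ℤ_[p]} : toZMod x ≠ 0 ↔ ‖x‖ = 1 := by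
  rw [Ne, toZMod_eq_zero_iff_norm_lt_one, not_lt, (norm_le_one x).ge_iff_eq', eq_comm]

theorem exists_mul_sq_eq_of_norm_lt {u d a : ℤ_[p]}
    (h : ‖u * a ^ 2 - d‖ < ‖2 * u * a‖ ^ 2) : ∃ z : ℤ_[p], u * z ^ 2 = d := by
  have hF : aeval a (C u * X ^ 2 - C d) = u * a ^ 2 - d := by simp
  have hF' : aeval a (derivative (C u * X ^ 2 - C d)) = 2 * u * a := by simp; ring
  obtain ⟨z, hz, -⟩ := hensels_lemma (by rwa [hF, hF'])
  exact ⟨z, by simpa [sub_eq_zero] using hz⟩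

theorem exists_mul_sq_eq_of_toZMod {u d a : ℤ_[p]} (h : toZMod (u * a ^ 2) = toZMod d)
    (h' : toZMod (2 * u * a) ≠ 0) : ∃ z : ℤ_[p], u * z ^ 2 = d := by
  refine exists_mul_sq_eq_of_norm_lt (a := a) ?_
  rw [toZMod_ne_zero_iff_norm_eq_one.1 h', one_pow, ← toZMod_eq_zero_iff_norm_lt_one, map_sub,
    h, sub_self]

theorem exists_sq_eq_of_toZMod {d a : ℤ_[p]} (h : toZMod (a ^ 2) = toZMod d)
    (h' : toZMod (2 * a) ≠ 0) : ∃ z : ℤ_[p], z ^ 2 = d := by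
  simpa using exists_mul_sq_eq_of_toZMod (u := 1) (by rwa [one_mul]) (by rwa [mul_one])

theorem exists_sq_add_mul_sq_eq (hp : p ≠ 2) {u c : ℤ_[p]} (hu : toZMod u ≠ 0)
    (hc : toZMod c ≠ 0) : ∃ y z : ℤ_[p], y ^ 2 + u * z ^ 2 = c := by
  obtain ⟨a, b, hab⟩ : ∃ a b : ZMod p, a ^ 2 + toZMod u * b ^ 2 = toZMod c := by
    obtain ⟨a, b, h⟩ := FiniteField.exists_root_sum_quadratic (f := X ^ 2)
      (g := C (toZMod u) * X ^ 2 + C (-toZMod c)) (degree_X_pow 2)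
      (by simpa using degree_quadratic (b := 0) (c := -toZMod c) hu)
      (by rw [ZMod.card]; exact Nat.odd_iff.1 ((Fact.out : p.Prime).odd_of_ne_two hp))
    simp only [eval_pow, eval_X, eval_add, eval_mul, eval_C] at h
    exact ⟨a, b, by linear_combination h⟩
  have h2 : (2 : ZMod p) ≠ 0 := Ring.two_ne_zero (by rwa [ZMod.ringChar_zmod_n])
  by_cases ha : a = 0
  · have hb : b ≠ 0 := by rintro rfl; simp [ha] at hab; exact hc hab.symm
    obtain ⟨z, hz⟩ := exists_mul_sq_eq_of_toZMod (u := u) (d := c) (a := b.val)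
      (by simpa [ha] using hab) (by simp [map_ofNat, h2, hu, hb])
    exact ⟨0, z, by simpa using hz⟩
  · obtain ⟨y, hy⟩ := exists_sq_eq_of_toZMod (d := c - u * (b.val : ℤ_[p]) ^ 2) (a := a.val)
      (by simp [← hab]) (by simp [map_ofNat, h2, ha])
    exact ⟨y, b.val, by rw [hy]; ring⟩

end PadicInt

open PadicInt

def HasChateletPoint (R : Type*) [CommRing R] : Prop :=
  ∃ x y z : R, y ^ 2 + 23 * z ^ 2 = -5 * (x ^ 4 + 115)

theorem not_hasChateletPoint {R : Type*} [CommRing R] [LinearOrder R] [IsStrictOrderedRing R] :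
    ¬ HasChateletPoint R := by
  rintro ⟨x, y, z, h⟩
  nlinarith [sq_nonneg y, sq_nonneg z, sq_nonneg (x ^ 2)]

theorem hasChateletPoint_padic_two : HasChateletPoint ℚ_[2] := by
  have norm_two : ‖(2 : ℤ_[2])‖ = 2⁻¹ := by simpa using norm_p (p := 2)
  obtain ⟨s, hs⟩ : ∃ s : ℤ_[2], 1 * s ^ 2 = -23 := by
    refine exists_mul_sq_eq_of_norm_lt (a := 1) ?_
    rw [show (1 * 1 ^ 2 - -23 : ℤ_[2]) = 2 ^ 3 * 3 by norm_num,
      show (2 * 1 * 1 : ℤ_[2]) = 2 by norm_num, norm_mul, norm_pow, norm_two]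
    calc (2⁻¹ : ℝ) ^ 3 * ‖(3 : ℤ_[2])‖ ≤ 2⁻¹ ^ 3 * 1 := by gcongr; exact norm_le_one 3
      _ < 2⁻¹ ^ 2 := by norm_num
  have hs' : (s : ℚ_[2]) ^ 2 = -23 := by simpa using congrArg ((↑) : ℤ_[2] → ℚ_[2]) hs
  have hs0 : (s : ℚ_[2]) ≠ 0 := by rintro h; norm_num [h] at hs'
  -- `23 z² = -288²`, and `287² - 288² = -575`
  refine ⟨0, -287, 288 / s, ?_⟩
  field_simp
  linear_combination 82944 * hs'

theorem hasChateletPoint_padic_five [Fact (Nat.Prime 5)] : HasChateletPoint ℚ_[5] := by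
  obtain ⟨i, hi⟩ : ∃ i : ℤ_[5], i ^ 2 = -1 :=
    exists_sq_eq_of_toZMod (a := 2) (by simp [map_ofNat]; decide +revert)
      (by simp [map_ofNat]; decide +revert)
  have hi' : (i : ℚ_[5]) ^ 2 = -1 := by simpa using congrArg ((↑) : ℤ_[5] → ℚ_[5]) hi
  exact ⟨0, 0, 5 * i, by linear_combination 575 * hi'⟩

theorem hasChateletPoint_padic_twentyThree [Fact (Nat.Prime 23)] :
    HasChateletPoint ℚ_[23] := by
  obtain ⟨t, ht⟩ : ∃ t : ℤ_[23], t ^ 2 = -5 - 575 * 23 ^ 4 :=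
    exists_sq_eq_of_toZMod (a := 8) (by simp [map_ofNat]; decide +revert)
      (by simp [map_ofNat]; decide +revert)
  have ht' : (t : ℚ_[23]) ^ 2 = -5 - 575 * 23 ^ 4 := by
    simpa using congrArg ((↑) : ℤ_[23] → ℚ_[23]) ht
  -- with `x = 1/23`, `y = t/23²` the equation times `23⁴` is `t² = -5 - 575·23⁴`
  refine ⟨23⁻¹, t / 23 ^ 2, 0, ?_⟩
  field_simp
  linear_combination ht'

theorem hasChateletPoint_padic_of_ne {p : ℕ} [Fact p.Prime] (h2 : p ≠ 2) (h5 : p ≠ 5)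
    (h23 : p ≠ 23) : HasChateletPoint ℚ_[p] := by
  have h5' : (5 : ZMod p) ≠ 0 := by
    exact_mod_cast ZMod.prime_ne_zero p 5 (hq := ⟨by norm_num⟩) h5
  have h23' : (23 : ZMod p) ≠ 0 := by
    exact_mod_cast ZMod.prime_ne_zero p 23 (hq := ⟨by norm_num⟩) h23
  obtain ⟨y, z, h⟩ := exists_sq_add_mul_sq_eq h2 (u := 23) (c := -575) (by rwa [map_ofNat])
    (by rw [map_neg, map_ofNat, show (575 : ZMod p) = 5 * 5 * 23 by norm_num]; simp [h5', h23'])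
  have h' : (y : ℚ_[p]) ^ 2 + 23 * (z : ℚ_[p]) ^ 2 = -575 := by
    simpa using congrArg ((↑) : ℤ_[p] → ℚ_[p]) h
  exact ⟨0, y, z, by linear_combination h'⟩

theorem hasChateletPoint_padic (p : ℕ) [Fact p.Prime] : HasChateletPoint ℚ_[p] := by
  by_cases h2 : p = 2
  · subst h2; exact hasChateletPoint_padic_two
  by_cases h5 : p = 5
  · subst h5; exact hasChateletPoint_padic_five
  by_cases h23 : p = 23
  · subst h23; exact hasChateletPoint_padic_twentyThree
  exact hasChateletPoint_padic_of_ne h2 h5 h23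

/-- The Châtelet equation `y² + 23·z² = -5·(x⁴ + 115)` has a `ℚ_p`-solution
for every prime `p`, but no real solution (hence no rational solution). -/
theorem stmt_13 :
    (∀ (p : ℕ) [Fact p.Prime],
      ∃ x y z : ℚ_[p], y ^ 2 + 23 * z ^ 2 = -5 * (x ^ 4 + 115)) ∧
    (¬ ∃ x y z : ℝ, y ^ 2 + 23 * z ^ 2 = -5 * (x ^ 4 + 115)) ∧
    (¬ ∃ x y z : ℚ, y ^ 2 + 23 * z ^ 2 = -5 * (x ^ 4 + 115)) :=
  ⟨fun p _ => hasChateletPoint_padic p, not_hasChateletPoint, not_hasChateletPoint⟩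
end
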